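/- arXiv:1708.03789 — 8 statements merged into one kernel-verified Lean document; each statement's English description precedes it below -/
import Mathlib

section
/- The function t ↦ ∫_ℝ e^{ty} q(y) dy, where q(y) = (1/2)|y|e^{−y²/2}, is even and strictly convex on ℝ, and equals 1 only at t = 0. -/
/-!
The Laplace transform `t ↦ ∫ exp (t y) dμ(y)` of a measure `μ` not concentrated at `0` is strictly
convex, because `exp` is strictly convex and `s y ≠ t y` whenever `s ≠ t` and `y ≠ 0`. An even
strictly convex `f` exceeds `f 0` everywhere else, since `f 0 < (f t + f (-t)) / 2 = f t`. Here
`μ = q dy` with `q` even, `∫ q = 1`, and `exp (t y) q y` integrable because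
`|y| ≤ exp y + exp (-y)`.
-/

open MeasureTheory Set Real

theorem StrictConvexOn.eq_apply_zero_iff_of_even {f : ℝ → ℝ} (hf : StrictConvexOn ℝ univ f)
    (heven : ∀ t, f (-t) = f t) (t : ℝ) : f t = f 0 ↔ t = 0 := by
  refine ⟨fun h => ?_, fun h => h ▸ rfl⟩
  by_contra ht
  have := hf.2 (mem_univ t) (mem_univ (-t)) (by contrapose! ht; linarith)
    (by norm_num : (0 : ℝ) < 1 / 2) (by norm_num : (0 : ℝ) < 1 / 2) (by norm_num)
  simp only [smul_eq_mul, heven, ← add_mul, ← mul_add] at this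
  norm_num [h] at this

theorem integral_exp_neg_mul_mul_of_even {μ : Measure ℝ} [μ.IsNegInvariant] {q : ℝ → ℝ}
    (hq : ∀ y, q (-y) = q y) (t : ℝ) :
    ∫ y, exp (-t * y) * q y ∂μ = ∫ y, exp (t * y) * q y ∂μ := by
  rw [← integral_neg_eq_self]
  simp [hq]

theorem strictConvexOn_integral_exp_mul {μ : Measure ℝ}
    (hint : ∀ t, Integrable (fun y => exp (t * y)) μ) (hμ : μ {0}ᶜ ≠ 0) :
    StrictConvexOn ℝ univ (fun t => ∫ y, exp (t * y) ∂μ) := by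
  refine ⟨convex_univ, fun s _ t _ hst a b ha hb hab => ?_⟩
  simp only [smul_eq_mul]
  have hle (y : ℝ) : exp ((a * s + b * t) * y) ≤ a * exp (s * y) + b * exp (t * y) := by
    simpa [add_mul, mul_assoc] using
      convexOn_exp.2 (mem_univ (s * y)) (mem_univ (t * y)) ha.le hb.le hab
  have hlt {y : ℝ} (hy : y ≠ 0) :
      exp ((a * s + b * t) * y) < a * exp (s * y) + b * exp (t * y) := by
    simpa [add_mul, mul_assoc] using
      strictConvexOn_exp.2 (mem_univ (s * y)) (mem_univ (t * y))
        (by simpa [hy] using hst) ha hb hab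
  have hsa := (hint s).const_mul a
  have htb := (hint t).const_mul b
  have hg : Integrable (fun y => a * exp (s * y) + b * exp (t * y)) μ := hsa.add htb
  rw [← integral_const_mul, ← integral_const_mul, ← integral_add hsa htb, ← sub_pos,
    ← integral_sub hg (hint _), integral_pos_iff_support_of_nonneg_ae
    (ae_of_all _ fun y => sub_nonneg.2 (hle y)) (hg.sub (hint _))]
  exact pos_iff_ne_zero.2 fun h => hμ <| measure_mono_null (fun y hy => (sub_pos.2 (hlt hy)).ne') h

theorem strictConvexOn_integral_exp_mul_mul {q : ℝ → ℝ} (hq : 0 ≤ q)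
    (hint : ∀ t, Integrable (fun y => exp (t * y) * q y)) (hq_pos : 0 < ∫ y, q y) :
    StrictConvexOn ℝ univ (fun t => ∫ y, exp (t * y) * q y) := by
  have hq_int : Integrable q := by simpa using hint 0
  have hmeas : AEMeasurable (fun y => ENNReal.ofReal (q y)) := hq_int.aemeasurable.ennreal_ofReal
  have hfin : ∀ᵐ y, ENNReal.ofReal (q y) < ⊤ := ae_of_all _ fun _ => ENNReal.ofReal_lt_top
  have hsmul (g : ℝ → ℝ) : (fun y => (ENNReal.ofReal (q y)).toReal • g y) = fun y => g y * q y := by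
    ext y; rw [ENNReal.toReal_ofReal (hq y), smul_eq_mul, mul_comm]
  have key := strictConvexOn_integral_exp_mul (μ := volume.withDensity fun y => ENNReal.ofReal (q y))
    (fun t => by rw [integrable_withDensity_iff_integrable_smul₀' hmeas hfin, hsmul]; exact hint t) ?_
  · simpa only [integral_withDensity_eq_integral_toReal_smul₀ hmeas hfin, hsmul] using key
  rw [withDensity_apply _ (measurableSet_singleton 0).compl, restrict_compl_singleton,
    ← ofReal_integral_eq_lintegral_ofReal hq_int (ae_of_all _ hq)]
  exact (ENNReal.ofReal_pos.2 hq_pos).ne'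

theorem integrable_exp_mul_mul_exp_neg_sq_div_two (s : ℝ) :
    Integrable fun y => exp (s * y) * exp (-y ^ 2 / 2) := by
  -- complete the square: `s y - y ^ 2 / 2 = s ^ 2 / 2 - (y - s) ^ 2 / 2`
  have h := ((integrable_exp_neg_mul_sq (b := 1 / 2) (by norm_num)).comp_sub_right s).const_mul
    (exp (s ^ 2 / 2))
  refine h.congr (ae_of_all _ fun y => ?_)
  simp only [← exp_add]
  ring_nf

theorem integrable_exp_mul_mul_half_abs_mul_exp_neg_sq_div_two (t : ℝ) :
    Integrable fun y => exp (t * y) * (1 / 2 * |y| * exp (-y ^ 2 / 2)) := by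
  refine ((integrable_exp_mul_mul_exp_neg_sq_div_two (t + 1)).add
    (integrable_exp_mul_mul_exp_neg_sq_div_two (t - 1))).mono'
    (by fun_prop : Continuous _).aestronglyMeasurable (ae_of_all _ fun y => ?_)
  have habs : 1 / 2 * |y| ≤ exp y + exp (-y) := by
    linarith [add_one_le_exp |y|, exp_abs_le y, abs_nonneg y]
  rw [Real.norm_of_nonneg (by positivity)]
  calc exp (t * y) * (1 / 2 * |y| * exp (-y ^ 2 / 2))
      = 1 / 2 * |y| * (exp (t * y) * exp (-y ^ 2 / 2)) := by ring
    _ ≤ (exp y + exp (-y)) * (exp (t * y) * exp (-y ^ 2 / 2)) := by gcongr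
    _ = _ := by
      simp only [Pi.add_apply]
      rw [show (t + 1) * y = t * y + y by ring, show (t - 1) * y = t * y + -y by ring,
        exp_add, exp_add]
      ring

theorem integral_Ioi_mul_exp_neg_sq_div_two : ∫ x in Ioi (0 : ℝ), x * exp (-x ^ 2 / 2) = 1 := by
  have h := integral_mul_cexp_neg_mul_sq (b := 1 / 2) (by norm_num)
  rw [← Complex.ofReal_inj, ← integral_complex_ofReal]
  calc ∫ x in Ioi (0 : ℝ), ((x * exp (-x ^ 2 / 2) : ℝ) : ℂ)
      = ∫ x in Ioi (0 : ℝ), (x : ℂ) * Complex.exp (-(1 / 2) * (x : ℂ) ^ 2) := by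
        congr 1 with x
        push_cast
        ring_nf
    _ = 1 := by rw [h]; norm_num

theorem integral_half_abs_mul_exp_neg_sq_div_two : ∫ y, 1 / 2 * |y| * exp (-y ^ 2 / 2) = 1 := by
  have h := integral_comp_abs (f := fun x => 1 / 2 * x * exp (-x ^ 2 / 2))
  simp only [sq_abs] at h
  simp only [mul_assoc] at h ⊢
  rw [h, integral_const_mul, integral_Ioi_mul_exp_neg_sq_div_two]
  norm_num

theorem laplace_of_q_even_strictConvex_eq_one_iff :
    (∀ t : ℝ,
      (∫ y : ℝ, Real.exp ((-t) * y) * ((1 / 2) * |y| * Real.exp (-y ^ 2 / 2)))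
        = ∫ y : ℝ, Real.exp (t * y) * ((1 / 2) * |y| * Real.exp (-y ^ 2 / 2))) ∧
    StrictConvexOn ℝ Set.univ
      (fun t : ℝ => ∫ y : ℝ, Real.exp (t * y) * ((1 / 2) * |y| * Real.exp (-y ^ 2 / 2))) ∧
    (∀ t : ℝ,
      (∫ y : ℝ, Real.exp (t * y) * ((1 / 2) * |y| * Real.exp (-y ^ 2 / 2))) = 1 ↔ t = 0) := by
  have heven := integral_exp_neg_mul_mul_of_even (μ := volume)
    (q := fun y => 1 / 2 * |y| * exp (-y ^ 2 / 2)) (fun y => by simp only [abs_neg, neg_sq])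
  have hconvex := strictConvexOn_integral_exp_mul_mul (fun y => by positivity)
    integrable_exp_mul_mul_half_abs_mul_exp_neg_sq_div_two
    (by rw [integral_half_abs_mul_exp_neg_sq_div_two]; exact one_pos)
  have hzero : ∫ y, exp (0 * y) * (1 / 2 * |y| * exp (-y ^ 2 / 2)) = 1 := by
    simpa using integral_half_abs_mul_exp_neg_sq_div_two
  refine ⟨heven, hconvex, fun t => ?_⟩
  have := hconvex.eq_apply_zero_iff_of_even heven t
  rwa [hzero] at this
end

section
/- Let P be a probability measure on ℝ with ∫ e^{tx} dP(x) < ∞ for all t ∈ ℝ, and suppose that ∫_{(−∞,t)} e^{tx} dP(x) ≤ (1/2)∫_ℝ e^{tx} dP(x) ≤ ∫_{(−∞,t]} e^{tx} dP(x) for all t ∈ ℝ. Then the distribution function F(t) = P((−∞,t]) is locally Lipschitz; in particular, P is absolutely continuous with respect to Lebesgue measure. -/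
open MeasureTheory Real Set
open scoped ENNReal NNReal

private lemma exp_sub_exp_le' {a b : ℝ} (h : a ≤ b) :
    exp b - exp a ≤ (b - a) * (exp a + exp b) := by
  have h1 := add_one_le_exp (a - b)
  have h2 : exp (a - b) * exp b = exp a := by rw [← exp_add]; ring_nf
  nlinarith [exp_pos a, exp_pos b, mul_le_mul_of_nonneg_right h1 (exp_pos b).le]

private lemma abs_exp_sub_exp (a b : ℝ) :
    |exp b - exp a| ≤ |b - a| * (exp a + exp b) := by
  rcases le_total a b with h | h
  · rw [abs_of_nonneg (sub_nonneg.2 (exp_le_exp.2 h)), abs_of_nonneg (sub_nonneg.2 h)]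
    exact exp_sub_exp_le' h
  · rw [abs_of_nonpos (sub_nonpos.2 (exp_le_exp.2 h)), abs_of_nonpos (sub_nonpos.2 h)]
    nlinarith [exp_sub_exp_le' h]

private lemma pointwise_bound {A s t : ℝ} (hs : -A ≤ s) (hst : s ≤ t) (ht : t ≤ A) (x : ℝ) :
    |exp (t * x) - exp (s * x)| ≤ (t - s) * (2 * (exp ((A + 1) * x) + exp (-(A + 1) * x))) := by
  have hA : 0 ≤ A := by
    have := hs.trans (hst.trans ht); linarith
  have h1 := abs_exp_sub_exp (s * x) (t * x)
  have habs : |t * x - s * x| = (t - s) * |x| := by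
    rw [← sub_mul, abs_mul, abs_of_nonneg (sub_nonneg.2 hst)]
  have hsA : |s| ≤ A := abs_le.2 ⟨hs, hst.trans ht⟩
  have htA : |t| ≤ A := abs_le.2 ⟨le_trans hs hst, ht⟩
  have hkey : ∀ u : ℝ, |u| ≤ A → |x| * exp (u * x) ≤ exp ((A + 1) * x) + exp (-(A + 1) * x) := by
    intro u hu
    have h2 : u * x ≤ A * |x| := by
      calc u * x ≤ |u * x| := le_abs_self _
        _ = |u| * |x| := abs_mul u x
        _ ≤ A * |x| := mul_le_mul_of_nonneg_right hu (abs_nonneg x)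
    have h3 : |x| ≤ exp |x| := by linarith [add_one_le_exp |x|]
    have h4 : |x| * exp (u * x) ≤ exp |x| * exp (A * |x|) := by
      have := exp_le_exp.2 h2
      have := exp_pos (u * x)
      nlinarith [exp_pos (A * |x|), abs_nonneg x]
    rw [← exp_add] at h4
    have h5 : exp (|x| + A * |x|) ≤ exp ((A + 1) * x) + exp (-(A + 1) * x) := by
      rcases abs_cases x with ⟨hx, _⟩ | ⟨hx, _⟩
      · have : |x| + A * |x| = (A + 1) * x := by rw [hx]; ring
        rw [this]
        exact le_add_of_nonneg_right (exp_pos _).le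
      · have : |x| + A * |x| = -(A + 1) * x := by rw [hx]; ring
        rw [this]
        exact le_add_of_nonneg_left (exp_pos _).le
    linarith
  calc |exp (t * x) - exp (s * x)| ≤ |t * x - s * x| * (exp (s * x) + exp (t * x)) := h1
    _ = (t - s) * (|x| * exp (s * x) + |x| * exp (t * x)) := by rw [habs]; ring
    _ ≤ (t - s) * (2 * (exp ((A + 1) * x) + exp (-(A + 1) * x))) := by
        have := hkey s hsA
        have := hkey t htA
        have hts : 0 ≤ t - s := sub_nonneg.2 hst
        nlinarith

private lemma keyIoo (P : Measure ℝ) [IsProbabilityMeasure P]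
    (hint : ∀ t : ℝ, Integrable (fun x => exp (t * x)) P)
    (hmed : ∀ t : ℝ,
      (∫ x in Set.Iio t, exp (t * x) ∂P) ≤ (1 / 2) * ∫ x, exp (t * x) ∂P ∧
      (1 / 2) * (∫ x, exp (t * x) ∂P) ≤ ∫ x in Set.Iic t, exp (t * x) ∂P)
    (A : ℝ) (hA : 0 < A) :
    ∃ C : ℝ, 0 ≤ C ∧ ∀ s t : ℝ, -A ≤ s → s ≤ t → t ≤ A →
      (P (Set.Ioo s t)).toReal ≤ C * (t - s) := by
  set g : ℝ → ℝ := fun x => 2 * (exp ((A + 1) * x) + exp (-(A + 1) * x)) with hg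
  have hgint : Integrable g P := ((hint (A + 1)).add (hint (-(A + 1)))).const_mul 2
  set M : ℝ := ∫ x, g x ∂P with hM
  have hM0 : 0 ≤ M := integral_nonneg fun x => by positivity
  refine ⟨exp (A * A) * ((3 / 2) * M), by positivity, ?_⟩
  intro s t hs hst ht
  rcases eq_or_lt_of_le hst with rfl | hlt
  · simp
  -- difference bound for set integrals
  have hdiff : ∀ u : Set ℝ,
      |(∫ x in u, exp (t * x) ∂P) - ∫ x in u, exp (s * x) ∂P| ≤ (t - s) * M := by
    intro u
    rw [← integral_sub (hint t).integrableOn (hint s).integrableOn]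
    calc |∫ x in u, (exp (t * x) - exp (s * x)) ∂P|
        ≤ ∫ x in u, |exp (t * x) - exp (s * x)| ∂P := by
          simpa [Real.norm_eq_abs] using
            norm_integral_le_integral_norm (μ := P.restrict u)
              (f := fun x => exp (t * x) - exp (s * x))
      _ ≤ ∫ x in u, (t - s) * g x ∂P := by
          refine integral_mono (((hint t).sub (hint s)).abs.integrableOn)
            ((hgint.const_mul (t - s)).integrableOn) ?_
          intro x
          exact pointwise_bound hs hst ht x
      _ ≤ ∫ x, (t - s) * g x ∂P := by
          refine setIntegral_le_integral (hgint.const_mul (t - s)) ?_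
          filter_upwards with x
          have h0 : (0:ℝ) ≤ 2 * (exp ((A + 1) * x) + exp (-(A + 1) * x)) := by positivity
          exact mul_nonneg (sub_nonneg.2 hst) h0
      _ = (t - s) * M := by rw [integral_const_mul]
  have h4 := hdiff Set.univ
  rw [Measure.restrict_univ] at h4
  have h5 := hdiff (Set.Iic s)
  have h1 : ∫ x in Set.Iio t, exp (t * x) ∂P
      = (∫ x in Set.Iic s, exp (t * x) ∂P) + ∫ x in Set.Ioo s t, exp (t * x) ∂P := by
    rw [← Set.Iic_union_Ioo_eq_Iio hlt,
      setIntegral_union ((Set.Iic_disjoint_Ioc le_rfl).mono_right Set.Ioo_subset_Ioc_self)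
        measurableSet_Ioo (hint t).integrableOn (hint t).integrableOn]
  have h2 := (hmed t).1
  have h3 := (hmed s).2
  have h6 : exp (-(A * A)) * (P (Set.Ioo s t)).toReal ≤ ∫ x in Set.Ioo s t, exp (t * x) ∂P := by
    refine setIntegral_ge_of_const_le_real measurableSet_Ioo (measure_ne_top P _) ?_ (hint t).integrableOn
    intro x hx
    refine exp_le_exp.2 ?_
    have hxA : |x| ≤ A := abs_le.2 ⟨le_of_lt (lt_of_le_of_lt hs hx.1), le_of_lt (lt_of_lt_of_le hx.2 ht)⟩
    have htA : |t| ≤ A := abs_le.2 ⟨hs.trans hst, ht⟩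
    have habs : |t * x| ≤ A * A := by
      rw [abs_mul]
      exact mul_le_mul htA hxA (abs_nonneg x) (le_trans (abs_nonneg t) htA)
    linarith [neg_abs_le (t * x)]
  have habs4 := abs_le.1 h4
  have habs5 := abs_le.1 h5
  have hIoo : ∫ x in Set.Ioo s t, exp (t * x) ∂P ≤ (3 / 2) * M * (t - s) := by
    linarith
  have hexp : exp (A * A) * exp (-(A * A)) = 1 := by rw [← exp_add]; simp
  have h7 := mul_le_mul_of_nonneg_left (h6.trans hIoo) (exp_pos (A * A)).le
  calc (P (Set.Ioo s t)).toReal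
      = exp (A * A) * exp (-(A * A)) * (P (Set.Ioo s t)).toReal := by rw [hexp, one_mul]
    _ = exp (A * A) * (exp (-(A * A)) * (P (Set.Ioo s t)).toReal) := by ring
    _ ≤ exp (A * A) * ((3 / 2) * M * (t - s)) := h7
    _ = exp (A * A) * ((3 / 2) * M) * (t - s) := by ring

private lemma keyIoc (P : Measure ℝ) [IsProbabilityMeasure P]
    (hint : ∀ t : ℝ, Integrable (fun x => exp (t * x)) P)
    (hmed : ∀ t : ℝ,
      (∫ x in Set.Iio t, exp (t * x) ∂P) ≤ (1 / 2) * ∫ x, exp (t * x) ∂P ∧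
      (1 / 2) * (∫ x, exp (t * x) ∂P) ≤ ∫ x in Set.Iic t, exp (t * x) ∂P)
    (A : ℝ) (hA : 0 < A) :
    ∃ C : ℝ, 0 ≤ C ∧ ∀ s t : ℝ, -A ≤ s → s ≤ t → t ≤ A →
      (P (Set.Ioc s t)).toReal ≤ C * (t - s) := by
  obtain ⟨C, hC0, hC⟩ := keyIoo P hint hmed (A + 1) (by linarith)
  refine ⟨C, hC0, ?_⟩
  intro s t hs hst ht
  have hstep : ∀ ε : ℝ, 0 < ε → (P (Set.Ioc s t)).toReal ≤ C * (t - s) + ε := by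
    intro ε hε
    set δ : ℝ := min 1 (ε / (C + 1)) with hδdef
    have hδ0 : 0 < δ := lt_min one_pos (div_pos hε (by linarith))
    have hδ1 : δ ≤ 1 := min_le_left _ _
    have hsub : Set.Ioc s t ⊆ Set.Ioo s (t + δ) := fun x hx =>
      ⟨hx.1, lt_of_le_of_lt hx.2 (by linarith)⟩
    have hmono : (P (Set.Ioc s t)).toReal ≤ (P (Set.Ioo s (t + δ))).toReal :=
      ENNReal.toReal_mono (measure_ne_top P _) (measure_mono hsub)
    have hb := hC s (t + δ) (by linarith) (by linarith) (by linarith)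
    have hCδ : C * δ ≤ ε := by
      have h1 : δ ≤ ε / (C + 1) := min_le_right _ _
      have h2 : C * δ ≤ C * (ε / (C + 1)) := mul_le_mul_of_nonneg_left h1 hC0
      have h3 : C * (ε / (C + 1)) ≤ ε := by
        rw [mul_div_assoc', div_le_iff₀ (by linarith : (0:ℝ) < C + 1)]
        nlinarith
      linarith
    calc (P (Set.Ioc s t)).toReal ≤ C * (t + δ - s) := hmono.trans hb
      _ = C * (t - s) + C * δ := by ring
      _ ≤ C * (t - s) + ε := by linarith
  by_contra hcon
  push_neg at hcon
  have := hstep (((P (Set.Ioc s t)).toReal - C * (t - s)) / 2) (by linarith)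
  linarith

theorem locally_lipschitz_cdf_and_abs_continuous
    (P : Measure ℝ) [IsProbabilityMeasure P]
    (hint : ∀ t : ℝ, Integrable (fun x => exp (t * x)) P)
    (hmed : ∀ t : ℝ,
      (∫ x in Set.Iio t, exp (t * x) ∂P) ≤ (1 / 2) * ∫ x, exp (t * x) ∂P ∧
      (1 / 2) * (∫ x, exp (t * x) ∂P) ≤ ∫ x in Set.Iic t, exp (t * x) ∂P) :
    (∀ A > (0 : ℝ), ∃ c : NNReal,
      LipschitzOnWith c (fun t => (P (Set.Iic t)).toReal) (Set.Icc (-A) A)) ∧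
    P ≪ volume := by
  constructor
  · intro A hA
    obtain ⟨C, hC0, hC⟩ := keyIoc P hint hmed A hA
    refine ⟨C.toNNReal, ?_⟩
    have key2 : ∀ x ∈ Set.Icc (-A) A, ∀ y ∈ Set.Icc (-A) A, x ≤ y →
        dist ((P (Set.Iic y)).toReal) ((P (Set.Iic x)).toReal) ≤ C * (y - x) := by
      intro x hx y hy hxy
      have hsplit : P (Set.Iic y) = P (Set.Iic x) + P (Set.Ioc x y) := by
        rw [← measure_union (Set.Iic_disjoint_Ioc le_rfl) measurableSet_Ioc,
          Set.Iic_union_Ioc_eq_Iic hxy]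
      rw [Real.dist_eq, hsplit, ENNReal.toReal_add (measure_ne_top P _) (measure_ne_top P _),
        add_sub_cancel_left, abs_of_nonneg ENNReal.toReal_nonneg]
      exact hC x y hx.1 hxy hy.2
    rw [lipschitzOnWith_iff_dist_le_mul]
    intro x hx y hy
    rw [Real.coe_toNNReal C hC0]
    rcases le_total x y with h | h
    · rw [dist_comm]
      calc dist ((P (Set.Iic y)).toReal) ((P (Set.Iic x)).toReal) ≤ C * (y - x) :=
          key2 x hx y hy h
        _ = C * dist x y := by
            rw [Real.dist_eq, abs_of_nonpos (by linarith)]; ring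
    · calc dist ((P (Set.Iic x)).toReal) ((P (Set.Iic y)).toReal) ≤ C * (x - y) :=
          key2 y hy x hx h
        _ = C * dist x y := by rw [Real.dist_eq, abs_of_nonneg (by linarith)]
  · refine Measure.AbsolutelyContinuous.mk fun u hu hu0 => ?_
    have hcover : (⋃ n : ℕ, Set.Ioo (-((n : ℝ) + 1)) ((n : ℝ) + 1)) = Set.univ := by
      ext x
      simp only [Set.mem_iUnion, Set.mem_Ioo, Set.mem_univ, iff_true]
      obtain ⟨n, hn⟩ := exists_nat_gt |x|
      have := abs_lt.1 (hn.trans (by linarith : (n : ℝ) < (n : ℝ) + 1))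
      exact ⟨n, this.1, this.2⟩
    have hP : P u = P (⋃ n : ℕ, u ∩ Set.Ioo (-((n : ℝ) + 1)) ((n : ℝ) + 1)) := by
      rw [← Set.inter_iUnion, hcover, Set.inter_univ]
    rw [hP]
    refine measure_iUnion_null fun n => ?_
    set B : ℝ := (n : ℝ) + 1 with hB
    have hB0 : 0 < B := by positivity
    obtain ⟨C, hC0, hC⟩ := keyIoc P hint hmed B hB0
    have hIoc : ∀ a b : ℝ,
        P (Set.Ioc a b ∩ Set.Ioo (-B) B) ≤ ENNReal.ofReal C * ENNReal.ofReal (b - a) := by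
      intro a b
      rcases lt_or_ge b a with hba | hab
      · rw [Set.Ioc_eq_empty (not_lt.2 hba.le), Set.empty_inter, measure_empty]
        exact zero_le
      · have hsub : Set.Ioc a b ∩ Set.Ioo (-B) B ⊆ Set.Ioc (max a (-B)) (min b B) := by
          rintro x ⟨⟨h1, h2⟩, h3, h4⟩
          exact ⟨max_lt h1 h3, le_min h2 h4.le⟩
        rcases le_total (max a (-B)) (min b B) with h' | h'
        · calc P (Set.Ioc a b ∩ Set.Ioo (-B) B) ≤ P (Set.Ioc (max a (-B)) (min b B)) :=
              measure_mono hsub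
            _ = ENNReal.ofReal ((P (Set.Ioc (max a (-B)) (min b B))).toReal) :=
                (ENNReal.ofReal_toReal (measure_ne_top _ _)).symm
            _ ≤ ENNReal.ofReal (C * (min b B - max a (-B))) :=
                ENNReal.ofReal_le_ofReal (hC _ _ (le_max_right _ _) h' (min_le_right _ _))
            _ ≤ ENNReal.ofReal C * ENNReal.ofReal (b - a) := by
                rw [ENNReal.ofReal_mul hC0]
                exact mul_le_mul_right (ENNReal.ofReal_le_ofReal
                  (sub_le_sub (min_le_left _ _) (le_max_left _ _))) _
        · calc P (Set.Ioc a b ∩ Set.Ioo (-B) B) ≤ P (Set.Ioc (max a (-B)) (min b B)) :=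
              measure_mono hsub
            _ = 0 := by rw [Set.Ioc_eq_empty (not_lt.2 h'), measure_empty]
            _ ≤ _ := zero_le
    have houter : StieltjesFunction.id.outer u = 0 := by
      have h1 : volume u = StieltjesFunction.id.measure u := by
        rw [Real.volume_eq_stieltjes_id]
      have h2 : StieltjesFunction.id.measure u = StieltjesFunction.id.outer u := by
        rw [StieltjesFunction.measure]
        rfl
      rw [← h2, ← h1, hu0]
    have hmain : ∀ δ : ℝ, 0 < δ →
        P (u ∩ Set.Ioo (-B) B) ≤ ENNReal.ofReal C * ENNReal.ofReal (δ + δ) := by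
      intro δ hδ
      have hlt : StieltjesFunction.id.outer u < ENNReal.ofReal δ := by
        rw [houter]; exact ENNReal.ofReal_pos.2 hδ
      rw [StieltjesFunction.outer, OuterMeasure.ofFunction_apply] at hlt
      obtain ⟨ts, hlt2⟩ := iInf_lt_iff.1 hlt
      obtain ⟨hts, hsum⟩ := iInf_lt_iff.1 hlt2
      obtain ⟨ε', hε'pos, hε'sum⟩ := ENNReal.exists_pos_sum_of_countable
        (ENNReal.ofReal_pos.2 hδ).ne' ℕ
      have hchoice : ∀ i : ℕ, ∃ a b : ℝ, ts i ⊆ Set.Ioc a b ∧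
          ENNReal.ofReal (b - a) ≤ StieltjesFunction.id.length (ts i) + ε' i := by
        intro i
        have hfin : StieltjesFunction.id.length (ts i) ≠ ⊤ :=
          ((ENNReal.le_tsum i).trans_lt (hsum.trans ENNReal.ofReal_lt_top)).ne
        have hlt3 : StieltjesFunction.id.length (ts i)
            < StieltjesFunction.id.length (ts i) + ε' i :=
          ENNReal.lt_add_right hfin (by exact_mod_cast (hε'pos i).ne')
        conv_lhs at hlt3 => rw [StieltjesFunction.length_eq]
        obtain ⟨a, ha⟩ := iInf_lt_iff.1 hlt3
        obtain ⟨b, hb⟩ := iInf_lt_iff.1 ha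
        obtain ⟨hsub, hval⟩ := iInf_lt_iff.1 hb
        refine ⟨a, b, fun x hx => hsub ⟨hx, not_isBot x⟩, ?_⟩
        simpa using hval.le
      choose av bv hsubv hlenv using hchoice
      calc P (u ∩ Set.Ioo (-B) B)
          ≤ P (⋃ i, ts i ∩ Set.Ioo (-B) B) := measure_mono (by
              rintro x ⟨hx1, hx2⟩
              obtain ⟨i, hi⟩ := Set.mem_iUnion.1 (hts hx1)
              exact Set.mem_iUnion.2 ⟨i, hi, hx2⟩)
        _ ≤ ∑' i, P (ts i ∩ Set.Ioo (-B) B) := measure_iUnion_le _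
        _ ≤ ∑' i, ENNReal.ofReal C * ENNReal.ofReal (bv i - av i) :=
            ENNReal.tsum_le_tsum fun i =>
              le_trans (measure_mono (Set.inter_subset_inter_left _ (hsubv i)))
                (hIoc (av i) (bv i))
        _ = ENNReal.ofReal C * ∑' i, ENNReal.ofReal (bv i - av i) := ENNReal.tsum_mul_left
        _ ≤ ENNReal.ofReal C *
            ∑' i, (StieltjesFunction.id.length (ts i) + (ε' i : ℝ≥0∞)) :=
            mul_le_mul_right (ENNReal.tsum_le_tsum hlenv) _
        _ = ENNReal.ofReal C * ((∑' i, StieltjesFunction.id.length (ts i)) +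
            ∑' i, (ε' i : ℝ≥0∞)) := by rw [ENNReal.tsum_add]
        _ ≤ ENNReal.ofReal C * (ENNReal.ofReal δ + ENNReal.ofReal δ) :=
            mul_le_mul_right (add_le_add hsum.le hε'sum.le) _
        _ = ENNReal.ofReal C * ENNReal.ofReal (δ + δ) := by
            rw [ENNReal.ofReal_add hδ.le hδ.le]
    refine le_antisymm ?_ zero_le
    refine ENNReal.le_of_forall_pos_le_add fun ε hε _ => ?_
    rw [zero_add]
    have hεR : (0 : ℝ) < ε := by exact_mod_cast hε
    set δ : ℝ := (ε : ℝ) / (2 * (C + 1)) with hδdef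
    have hδ : 0 < δ := div_pos hεR (by linarith)
    refine (hmain δ hδ).trans ?_
    rw [← ENNReal.ofReal_mul hC0, ← ENNReal.ofReal_coe_nnreal]
    refine ENNReal.ofReal_le_ofReal ?_
    have hkey : C * (δ + δ) = C * (ε : ℝ) / (C + 1) := by
      rw [hδdef]; field_simp; ring
    rw [hkey, div_le_iff₀ (by linarith : (0 : ℝ) < C + 1)]
    nlinarith
end

section
/- Let μ₁ and μ₂ be finite nonnegative Borel measures on ℝ whose two-sided Laplace transforms t ↦ ∫ e^{tx} dμᵢ(x) are finite and equal for all t in a nonempty open interval. Then μ₁ = μ₂. -/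
/-!
The Laplace transforms `z ↦ ∫ e^{zx} dμᵢ` are holomorphic on the strip `a < Re z < b` and agree on
the real segment `(a, b)`, hence on the whole strip by the identity theorem. On the vertical line
`Re z = t` they are the characteristic functions of the finite measures `e^{tx} μᵢ(dx)`, which are
therefore equal; removing the positive density `e^{tx}` gives `μ₁ = μ₂`.
-/

open MeasureTheory Real ProbabilityTheory Set Filter Topology

theorem eqOn_complexMGF_of_eqOn_mgf {Ω Ω' : Type*} {mΩ : MeasurableSpace Ω}
    {mΩ' : MeasurableSpace Ω'} {X : Ω → ℝ} {Y : Ω' → ℝ} {μ : Measure Ω} {μ' : Measure Ω'}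
    {a b : ℝ} (hab : a < b) (hX : Ioo a b ⊆ integrableExpSet X μ)
    (hY : Ioo a b ⊆ integrableExpSet Y μ') (h : EqOn (mgf X μ) (mgf Y μ') (Ioo a b)) :
    EqOn (complexMGF X μ) (complexMGF Y μ') {z | z.re ∈ Ioo a b} := by
  have hXan : AnalyticOnNhd ℂ (complexMGF X μ) {z | z.re ∈ Ioo a b} :=
    analyticOnNhd_complexMGF.mono fun z hz ↦ interior_maximal hX isOpen_Ioo hz
  have hYan : AnalyticOnNhd ℂ (complexMGF Y μ') {z | z.re ∈ Ioo a b} :=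
    analyticOnNhd_complexMGF.mono fun z hz ↦ interior_maximal hY isOpen_Ioo hz
  obtain ⟨t, ht⟩ := nonempty_Ioo.mpr hab
  have hreal : ∃ᶠ s : ℝ in 𝓝[≠] t, complexMGF X μ s = complexMGF Y μ' s := by
    refine (eventually_nhdsWithin_of_eventually_nhds (s := {t}ᶜ)
      (isOpen_Ioo.mem_nhds ht)).frequently.mono fun s hs ↦ ?_
    rw [complexMGF_ofReal, complexMGF_ofReal, h hs]
  have hofReal : Tendsto Complex.ofReal (𝓝[≠] t) (𝓝[≠] (t : ℂ)) :=
    tendsto_nhdsWithin_of_tendsto_nhds_of_eventually_within _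
      (Complex.continuous_ofReal.tendsto t |>.mono_left nhdsWithin_le_nhds)
      (eventually_nhdsWithin_of_forall fun s hs ↦ by simpa using hs)
  exact hXan.eqOn_of_preconnected_of_frequently_eq hYan
    ((convex_Ioo a b).linear_preimage Complex.reLm).isPreconnected (by simpa using ht)
    (hofReal.frequently hreal)

theorem charFun_withDensity_exp_mul (μ : Measure ℝ) (t s : ℝ) :
    charFun (μ.withDensity fun x ↦ ENNReal.ofReal (rexp (t * x))) s
      = complexMGF id μ (t + s * Complex.I) := by
  rw [charFun_apply_real, integral_withDensity_eq_integral_toReal_smul (by fun_prop)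
    (ae_of_all _ fun _ ↦ ENNReal.ofReal_lt_top)]
  refine integral_congr_ae (ae_of_all _ fun x ↦ ?_)
  simp only [ENNReal.toReal_ofReal (exp_pos _).le, id, Complex.real_smul, Complex.ofReal_exp,
    ← Complex.exp_add]
  push_cast
  ring_nf

theorem withDensity_exp_withDensity_exp_neg {α : Type*} [MeasurableSpace α] (μ : Measure α)
    {f : α → ℝ} (hf : Measurable f) :
    (μ.withDensity fun x ↦ ENNReal.ofReal (rexp (f x))).withDensity
      (fun x ↦ ENNReal.ofReal (rexp (-f x))) = μ := by
  rw [← withDensity_mul μ (by fun_prop) (by fun_prop)]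
  convert withDensity_one (μ := μ)
  ext x
  simp [← ENNReal.ofReal_mul (exp_pos _).le, ← exp_add]

theorem withDensity_exp_injective {α : Type*} [MeasurableSpace α] {f : α → ℝ}
    (hf : Measurable f) :
    Function.Injective fun μ : Measure α ↦ μ.withDensity fun x ↦ ENNReal.ofReal (rexp (f x)) :=
  Function.LeftInverse.injective
    (g := fun ν ↦ ν.withDensity fun x ↦ ENNReal.ofReal (rexp (-f x)))
    (withDensity_exp_withDensity_exp_neg · hf)

theorem eq_of_laplace_eq_on_interval
    (μ₁ μ₂ : Measure ℝ) [IsFiniteMeasure μ₁] [IsFiniteMeasure μ₂]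
    (a b : ℝ) (hab : a < b)
    (h₁ : ∀ t ∈ Set.Ioo a b, Integrable (fun x => exp (t * x)) μ₁)
    (h₂ : ∀ t ∈ Set.Ioo a b, Integrable (fun x => exp (t * x)) μ₂)
    (heq : ∀ t ∈ Set.Ioo a b, ∫ x, exp (t * x) ∂μ₁ = ∫ x, exp (t * x) ∂μ₂) :
    μ₁ = μ₂ := by
  have hstrip : EqOn (complexMGF id μ₁) (complexMGF id μ₂) {z | z.re ∈ Ioo a b} :=
    eqOn_complexMGF_of_eqOn_mgf hab h₁ h₂ heq
  obtain ⟨t, ht⟩ := nonempty_Ioo.mpr hab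
  have := isFiniteMeasure_withDensity_ofReal (h₁ t ht).2
  have := isFiniteMeasure_withDensity_ofReal (h₂ t ht).2
  refine withDensity_exp_injective (measurable_const_mul t) <|
    Measure.ext_of_charFun <| funext fun s ↦ ?_
  rw [charFun_withDensity_exp_mul, charFun_withDensity_exp_mul]
  exact hstrip (by simpa using ht)
end

section
/- Let P be a probability measure on ℝ with finite Laplace transform L(t) for all t ∈ ℝ such that t is a median of the exponentially tilted measure P_t for all t ∈ ℝ. Then the cumulative distribution function of P is strictly increasing on ℝ. -/
open MeasureTheory Real
open scoped ENNReal

theorem cdf_strictMono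
    (P : Measure ℝ) [IsProbabilityMeasure P]
    (hint : ∀ t : ℝ, Integrable (fun x => exp (t * x)) P)
    (hmed : ∀ t : ℝ,
      (P.withDensity (fun x => ENNReal.ofReal (exp (t * x) / ∫ y, exp (t * y) ∂P)))
          (Set.Iio t) ≤ 1 / 2 ∧
      (1 / 2 : ℝ≥0∞) ≤
        (P.withDensity (fun x => ENNReal.ofReal (exp (t * x) / ∫ y, exp (t * y) ∂P)))
          (Set.Iic t)) :
    StrictMono (fun t => (P (Set.Iic t)).toReal) := by
  set L : ℝ → ℝ := fun t => ∫ y, exp (t * y) ∂P with hLdef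
  have hLpos : ∀ t, 0 < L t := by
    intro t
    rw [hLdef]
    rw [integral_pos_iff_support_of_nonneg_ae
      (Filter.Eventually.of_forall fun x => (exp_pos _).le) (hint t)]
    have hsupp : Function.support (fun y => exp (t * y)) = Set.univ := by
      ext x; simp [Function.mem_support, (exp_pos _).ne']
    simp [hsupp]
  have hhalf : (1 / 2 : ℝ≥0∞) = ENNReal.ofReal (1 / 2) := by
    rw [ENNReal.ofReal_div_of_pos (by norm_num)]
    norm_num
  have key : ∀ a b : ℝ, a < b → P (Set.Ioc a b) ≠ 0 := by
    intro a b hab hzero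
    -- the withDensity measure of a measurable set as ofReal of a set integral
    have hWD : ∀ t : ℝ, ∀ s : Set ℝ, MeasurableSet s →
        (P.withDensity (fun x => ENNReal.ofReal (exp (t * x) / L t))) s
          = ENNReal.ofReal (∫ x in s, exp (t * x) / L t ∂P) := by
      intro t s hs
      rw [withDensity_apply _ hs,
        ← ofReal_integral_eq_lintegral_ofReal ((hint t).div_const _).restrict
          (Filter.Eventually.of_forall fun x => div_nonneg (exp_pos _).le (hLpos t).le)]
    -- for t in (a,b), the integral over Iio t and Iic t equals integral over Iic a
    have hA : ∀ t ∈ Set.Ioo a b, ∫ x in Set.Iic a, exp (t * x) ∂P = L t / 2 := by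
      intro t ht
      have hae1 : Set.Iio t =ᵐ[P] Set.Iic a := by
        rw [MeasureTheory.ae_eq_set]
        constructor
        · refine measure_mono_null ?_ hzero
          rintro x ⟨hx1, hx2⟩
          exact ⟨lt_of_not_ge hx2, hx1.le.trans ht.2.le⟩
        · refine measure_mono_null ?_ (measure_empty (μ := P))
          rintro x ⟨hx1, hx2⟩
          exact absurd (hx1.trans_lt ht.1) hx2
      have hae2 : Set.Iic t =ᵐ[P] Set.Iic a := by
        rw [MeasureTheory.ae_eq_set]
        constructor
        · refine measure_mono_null ?_ hzero
          rintro x ⟨hx1, hx2⟩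
          exact ⟨lt_of_not_ge hx2, hx1.trans ht.2.le⟩
        · refine measure_mono_null ?_ (measure_empty (μ := P))
          rintro x ⟨hx1, hx2⟩
          exact absurd (hx1.trans ht.1.le) hx2
      obtain ⟨hm1, hm2⟩ := hmed t
      rw [hWD t _ measurableSet_Iio, setIntegral_congr_set hae1] at hm1
      rw [hWD t _ measurableSet_Iic, setIntegral_congr_set hae2] at hm2
      have hr_nonneg : 0 ≤ ∫ x in Set.Iic a, exp (t * x) / L t ∂P :=
        integral_nonneg fun x => div_nonneg (exp_pos _).le (hLpos t).le
      rw [hhalf] at hm1 hm2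
      have h1 : ∫ x in Set.Iic a, exp (t * x) / L t ∂P ≤ 1 / 2 :=
        (ENNReal.ofReal_le_ofReal_iff (by norm_num)).mp hm1
      have h2 : (1 : ℝ) / 2 ≤ ∫ x in Set.Iic a, exp (t * x) / L t ∂P :=
        (ENNReal.ofReal_le_ofReal_iff hr_nonneg).mp hm2
      have heq : (∫ x in Set.Iic a, exp (t * x) ∂P) / L t = 1 / 2 := by
        rw [← integral_div]; linarith
      have := (div_eq_iff (hLpos t).ne').mp heq
      linarith
    -- integral over Ioi b also equals L t / 2
    have hB : ∀ t ∈ Set.Ioo a b, ∫ x in Set.Ioi b, exp (t * x) ∂P = L t / 2 := by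
      intro t ht
      have hsplit : (∫ x in Set.Iic b, exp (t * x) ∂P) + ∫ x in Set.Ioi b, exp (t * x) ∂P
          = L t := by
        rw [hLdef]
        have := integral_add_compl (measurableSet_Iic (a := b)) (hint t)
        rwa [Set.compl_Iic] at this
      have hae : Set.Iic b =ᵐ[P] Set.Iic a := by
        rw [MeasureTheory.ae_eq_set]
        constructor
        · refine measure_mono_null ?_ hzero
          rintro x ⟨hx1, hx2⟩
          exact ⟨lt_of_not_ge hx2, hx1⟩
        · refine measure_mono_null ?_ (measure_empty (μ := P))
          rintro x ⟨hx1, hx2⟩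
          exact absurd (hx1.trans hab.le) hx2
      rw [setIntegral_congr_set hae, hA t ht] at hsplit
      linarith
    -- pick two tilts
    set t1 : ℝ := a + (b - a) / 3 with ht1def
    set t2 : ℝ := a + 2 * (b - a) / 3 with ht2def
    have ht1 : t1 ∈ Set.Ioo a b := ⟨by rw [ht1def]; linarith, by rw [ht1def]; linarith⟩
    have ht2 : t2 ∈ Set.Ioo a b := ⟨by rw [ht2def]; linarith, by rw [ht2def]; linarith⟩
    have hd : 0 < t2 - t1 := by rw [ht1def, ht2def]; linarith
    -- ratio inequalities
    have ineq1 : ∫ x in Set.Iic a, exp (t2 * x) ∂P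
        ≤ exp ((t2 - t1) * a) * ∫ x in Set.Iic a, exp (t1 * x) ∂P := by
      rw [← integral_const_mul]
      refine setIntegral_mono_on (hint t2).integrableOn
        (((hint t1).const_mul _).integrableOn) measurableSet_Iic ?_
      intro x hx
      have : exp (t2 * x) = exp ((t2 - t1) * x) * exp (t1 * x) := by
        rw [← exp_add]; ring_nf
      rw [this]
      exact mul_le_mul_of_nonneg_right
        (exp_le_exp.mpr (mul_le_mul_of_nonneg_left hx hd.le)) (exp_pos _).le
    have ineq2 : exp ((t2 - t1) * b) * ∫ x in Set.Ioi b, exp (t1 * x) ∂P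
        ≤ ∫ x in Set.Ioi b, exp (t2 * x) ∂P := by
      rw [← integral_const_mul]
      refine setIntegral_mono_on (((hint t1).const_mul _).integrableOn)
        (hint t2).integrableOn measurableSet_Ioi ?_
      intro x hx
      have : exp (t2 * x) = exp ((t2 - t1) * x) * exp (t1 * x) := by
        rw [← exp_add]; ring_nf
      rw [this]
      exact mul_le_mul_of_nonneg_right
        (exp_le_exp.mpr (mul_le_mul_of_nonneg_left hx.le hd.le)) (exp_pos _).le
    rw [hA t1 ht1, hA t2 ht2] at ineq1
    rw [hB t1 ht1, hB t2 ht2] at ineq2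
    have hE : 0 < L t1 / 2 := by have := hLpos t1; linarith
    have hcomb : exp ((t2 - t1) * b) * (L t1 / 2) ≤ exp ((t2 - t1) * a) * (L t1 / 2) :=
      le_trans ineq2 ineq1
    have hlt : exp ((t2 - t1) * a) < exp ((t2 - t1) * b) :=
      exp_lt_exp.mpr (by nlinarith)
    nlinarith
  -- conclude strict monotonicity
  intro a b hab
  have hunion : P (Set.Iic b) = P (Set.Iic a) + P (Set.Ioc a b) := by
    rw [← Set.Iic_union_Ioc_eq_Iic hab.le,
      measure_union (Set.Iic_disjoint_Ioc le_rfl) measurableSet_Ioc]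
  have hlt : P (Set.Iic a) < P (Set.Iic b) := by
    rw [hunion]
    exact ENNReal.lt_add_right (measure_ne_top P _) (key a b hab)
  exact (ENNReal.toReal_lt_toReal (measure_ne_top P _) (measure_ne_top P _)).mpr hlt
end

section
/- Let g : ℝ → [0,∞) be locally integrable, g·φ a probability density with finite Laplace transform for all t, and suppose for all t ∈ ℝ: ∫_{−∞}^t e^{−(t−x)²/2} g(x) dx = (1/2) ∫_ℝ e^{−(t−x)²/2} g(x) dx, and additionally for almost every t: g(t) = (1/2)(∫_t^∞ x e^{−(t−x)²/2} g(x) dx − ∫_{−∞}^t x e^{−(t−x)²/2} g(x) dx). Then g satisfies g(t) = ∫_ℝ q(t−x) g(x) dx for almost every t, where q(y) = (1/2)|y|e^{−y²/2}. -/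
/-!
Fix `t` and put `w x = exp (-(t - x) ^ 2 / 2) * g x`. The first identity says that `t` is a median
of `w`, so the terms `± t * ∫ w` cancel when `∫ |t - x| w x dx` is split at `t`, leaving
`∫_{x > t} x w x dx - ∫_{x ≤ t} x w x dx`, which is `2 g t` by the second identity.
Since `w x = c · exp (t x) g(x) φ(x)` and `|x| ≤ eˣ + e⁻ˣ`, finiteness of the Laplace transform of
`g φ` makes `w` and `x w x` integrable.
-/

open MeasureTheory Real Set

lemma abs_le_exp_add_exp_neg (x : ℝ) : |x| ≤ exp x + exp (-x) :=
  (le_add_of_nonneg_right zero_le_one).trans ((add_one_le_exp _).trans (exp_abs_le x))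

lemma integrable_mul_exp_mul_of_integrable_exp_mul {f : ℝ → ℝ} {t : ℝ}
    (hpos : Integrable fun x ↦ exp ((t + 1) * x) * f x)
    (hneg : Integrable fun x ↦ exp ((t - 1) * x) * f x) :
    Integrable fun x ↦ x * (exp (t * x) * f x) := by
  have hpos_eq (x : ℝ) : exp ((t + 1) * x) = exp (t * x) * exp x := by rw [← exp_add]; ring_nf
  have hneg_eq (x : ℝ) : exp ((t - 1) * x) = exp (t * x) * exp (-x) := by rw [← exp_add]; ring_nf
  refine (hpos.norm.add hneg.norm).mono' ?_ (Filter.Eventually.of_forall fun x ↦ ?_)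
  · have hfactor : (fun x ↦ x * (exp (t * x) * f x)) =
        fun x ↦ (x * exp (-x)) * (exp ((t + 1) * x) * f x) := by
      funext x
      rw [hpos_eq, exp_neg]
      field_simp
    rw [hfactor]
    exact (by fun_prop : Continuous fun x : ℝ ↦ x * exp (-x)).aestronglyMeasurable.mul
      hpos.aestronglyMeasurable
  · simp only [Pi.add_apply, norm_mul, norm_eq_abs, abs_exp, hpos_eq, hneg_eq]
    calc |x| * (exp (t * x) * |f x|)
        ≤ (exp x + exp (-x)) * (exp (t * x) * |f x|) := by
          gcongr; exact abs_le_exp_add_exp_neg x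
      _ = _ := by ring

lemma integral_abs_sub_mul_of_integral_Iic_eq_half {w : ℝ → ℝ} {t : ℝ} (hw : Integrable w)
    (hxw : Integrable fun x ↦ x * w x)
    (hmed : ∫ x in Iic t, w x = (1 / 2) * ∫ x, w x) :
    ∫ x, |t - x| * w x = (∫ x in Ioi t, x * w x) - ∫ x in Iic t, x * w x := by
  have htw : Integrable fun x ↦ (t - x) * w x :=
    ((hw.const_mul t).sub hxw).congr (.of_forall fun x ↦ (sub_mul t x (w x)).symm)
  have habs : Integrable fun x ↦ |t - x| * w x :=
    htw.mono ((continuous_const.sub continuous_id).abs.aestronglyMeasurable.mul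
      hw.aestronglyMeasurable) (Filter.Eventually.of_forall fun x ↦ by simp)
  have hIoi : ∫ x in Ioi t, w x = ∫ x in Iic t, w x := by
    linarith [intervalIntegral.integral_Iic_add_Ioi (b := t) hw.integrableOn hw.integrableOn]
  have hleft : ∫ x in Iic t, |t - x| * w x =
      t * (∫ x in Iic t, w x) - ∫ x in Iic t, x * w x := by
    rw [← integral_const_mul, ← integral_sub (hw.const_mul t).integrableOn hxw.integrableOn]
    refine setIntegral_congr_fun measurableSet_Iic fun x hx ↦ ?_
    rw [abs_of_nonneg (sub_nonneg.2 hx)]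
    ring
  have hright : ∫ x in Ioi t, |t - x| * w x =
      (∫ x in Ioi t, x * w x) - t * ∫ x in Ioi t, w x := by
    rw [← integral_const_mul, ← integral_sub hxw.integrableOn (hw.const_mul t).integrableOn]
    refine setIntegral_congr_fun measurableSet_Ioi fun x hx ↦ ?_
    rw [abs_of_neg (sub_neg.2 hx)]
    ring
  rw [← intervalIntegral.integral_Iic_add_Ioi habs.integrableOn habs.integrableOn, hleft, hright,
    hIoi]
  ring

theorem convolution_equation_of_identities_general
    (g : ℝ → ℝ)
    (hint : ∀ t : ℝ,
      Integrable (fun x : ℝ => exp (t * x) * g x * (exp (-x ^ 2 / 2) / Real.sqrt (2 * π))))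
    (h1 : ∀ t : ℝ,
      (∫ x in Set.Iic t, exp (-(t - x) ^ 2 / 2) * g x) =
        (1 / 2) * ∫ x : ℝ, exp (-(t - x) ^ 2 / 2) * g x)
    (h2 : ∀ᵐ t : ℝ,
      g t = (1 / 2) * ((∫ x in Set.Ici t, x * exp (-(t - x) ^ 2 / 2) * g x) -
        ∫ x in Set.Iic t, x * exp (-(t - x) ^ 2 / 2) * g x)) :
    ∀ᵐ t : ℝ, g t = ∫ x : ℝ, (1 / 2) * |t - x| * exp (-(t - x) ^ 2 / 2) * g x := by
  filter_upwards [h2] with t ht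
  set f : ℝ → ℝ := fun x ↦ g x * (exp (-x ^ 2 / 2) / √(2 * π))
  have hf (s : ℝ) : Integrable fun x ↦ exp (s * x) * f x := by simpa only [mul_assoc] using hint s
  set c := √(2 * π) * exp (-t ^ 2 / 2)
  have hw_eq (x : ℝ) : c * (exp (t * x) * f x) = exp (-(t - x) ^ 2 / 2) * g x := by
    have hgauss : exp (-(t - x) ^ 2 / 2) = exp (-t ^ 2 / 2) * exp (t * x) * exp (-x ^ 2 / 2) := by
      rw [← exp_add, ← exp_add]; ring_nf
    have : √(2 * π) ≠ 0 := by positivity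
    rw [hgauss]
    simp only [c, f]
    field_simp
  have hw : Integrable fun x ↦ exp (-(t - x) ^ 2 / 2) * g x :=
    ((hf t).const_mul c).congr (.of_forall hw_eq)
  have hxw : Integrable fun x ↦ x * (exp (-(t - x) ^ 2 / 2) * g x) :=
    ((integrable_mul_exp_mul_of_integrable_exp_mul (hf _) (hf _)).const_mul c).congr
      (.of_forall fun x ↦ by simp only [← hw_eq]; ring)
  rw [ht, integral_Ici_eq_integral_Ioi]
  simp only [mul_assoc]
  rw [← integral_abs_sub_mul_of_integral_Iic_eq_half hw hxw (h1 t), ← integral_const_mul]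

theorem convolution_equation_of_identities
    (g : ℝ → ℝ) (hg0 : ∀ x, 0 ≤ g x) (hloc : LocallyIntegrable g)
    (hprob : ∫ x : ℝ, g x * (exp (-x ^ 2 / 2) / Real.sqrt (2 * π)) = 1)
    (hint : ∀ t : ℝ,
      Integrable (fun x : ℝ => exp (t * x) * g x * (exp (-x ^ 2 / 2) / Real.sqrt (2 * π))))
    (h1 : ∀ t : ℝ,
      (∫ x in Set.Iic t, exp (-(t - x) ^ 2 / 2) * g x) =
        (1 / 2) * ∫ x : ℝ, exp (-(t - x) ^ 2 / 2) * g x)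
    (h2 : ∀ᵐ t : ℝ,
      g t = (1 / 2) * ((∫ x in Set.Ici t, x * exp (-(t - x) ^ 2 / 2) * g x) -
        ∫ x in Set.Iic t, x * exp (-(t - x) ^ 2 / 2) * g x)) :
    ∀ᵐ t : ℝ, g t = ∫ x : ℝ, (1 / 2) * |t - x| * exp (-(t - x) ^ 2 / 2) * g x :=
  convolution_equation_of_identities_general g hint h1 h2
end

section
/- Let P be a probability measure on ℝⁿ with everywhere-finite Laplace transform L, and suppose every tilted measure P_t(dx) = e^{⟨t,x⟩}P(dx)/L(t) is symmetric about its mean m(t) = ∇L(t)/L(t). Then for all s, t ∈ ℝⁿ: 2⟨s, m(t)⟩ = log L(t+s) − log L(t−s), and consequently 2m(t) = m(t+s) + m(t−s) for all s, t ∈ ℝⁿ. -/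
open MeasureTheory Real
open scoped RealInnerProductSpace

theorem log_laplace_functional_equation_of_symmetric_tiltings
    (n : ℕ) (P : Measure (EuclideanSpace ℝ (Fin n))) [IsProbabilityMeasure P]
    (L : EuclideanSpace ℝ (Fin n) → ℝ)
    (m : EuclideanSpace ℝ (Fin n) → EuclideanSpace ℝ (Fin n))
    (hint : ∀ t, Integrable (fun x => exp ⟪t, x⟫) P)
    (hL : ∀ t, L t = ∫ x, exp ⟪t, x⟫ ∂P)
    (hm : ∀ t, m t = (L t)⁻¹ • gradient L t)
    (hsym : ∀ t : EuclideanSpace ℝ (Fin n),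
      (P.withDensity (fun x => ENNReal.ofReal (exp ⟪t, x⟫ / L t))).map
          (fun x => x - m t) =
        (P.withDensity (fun x => ENNReal.ofReal (exp ⟪t, x⟫ / L t))).map
          (fun x => m t - x)) :
    (∀ t s : EuclideanSpace ℝ (Fin n),
      2 * ⟪s, m t⟫ = Real.log (L (t + s)) - Real.log (L (t - s))) ∧
    (∀ t s : EuclideanSpace ℝ (Fin n), (2 : ℝ) • m t = m (t + s) + m (t - s)) := by
  have hLpos : ∀ t, 0 < L t := by
    intro t
    rw [hL t]
    exact integral_exp_pos (hint t)
  have hinner : ∀ u : EuclideanSpace ℝ (Fin n),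
      Measurable fun x : EuclideanSpace ℝ (Fin n) => (⟪u, x⟫ : ℝ) := fun u =>
    measurable_const.inner measurable_id
  have hm1 : ∀ u : EuclideanSpace ℝ (Fin n),
      Measurable fun x : EuclideanSpace ℝ (Fin n) => ENNReal.ofReal (exp ⟪u, x⟫) := fun u =>
    ((hinner u).exp).ennreal_ofReal
  have aux : ∀ (u : EuclideanSpace ℝ (Fin n)) (c : ℝ), 0 ≤ c →
      ∫⁻ x, ENNReal.ofReal (c * exp ⟪u, x⟫) ∂P = ENNReal.ofReal (c * L u) := by
    intro u c hc
    have e : ∀ x : EuclideanSpace ℝ (Fin n),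
        ENNReal.ofReal (c * exp ⟪u, x⟫)
          = ENNReal.ofReal c * ENNReal.ofReal (exp ⟪u, x⟫) := fun x => ENNReal.ofReal_mul hc
    rw [lintegral_congr e, lintegral_const_mul _ (hm1 u),
      ← ofReal_integral_eq_lintegral_ofReal (hint u)
        (Filter.Eventually.of_forall fun x => (Real.exp_pos _).le),
      ← hL u, ← ENNReal.ofReal_mul hc]
  have key : ∀ t s : EuclideanSpace ℝ (Fin n),
      exp (-⟪s, m t⟫) * L (t + s) = exp ⟪s, m t⟫ * L (t - s) := by
    intro t s
    have hd : Measurable fun x : EuclideanSpace ℝ (Fin n) =>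
        ENNReal.ofReal (exp ⟪t, x⟫ / L t) :=
      (((hinner t).exp).div_const (L t)).ennreal_ofReal
    have hg1 : Measurable fun x : EuclideanSpace ℝ (Fin n) =>
        ENNReal.ofReal (exp ⟪s, x - m t⟫) :=
      ((measurable_const.inner (measurable_id.sub measurable_const)).exp).ennreal_ofReal
    have hg2 : Measurable fun x : EuclideanSpace ℝ (Fin n) =>
        ENNReal.ofReal (exp ⟪s, m t - x⟫) :=
      ((measurable_const.inner (measurable_const.sub measurable_id)).exp).ennreal_ofReal
    have h1 : ∫⁻ x, ENNReal.ofReal (exp ⟪s, x - m t⟫)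
          ∂(P.withDensity (fun x => ENNReal.ofReal (exp ⟪t, x⟫ / L t)))
        = ∫⁻ x, ENNReal.ofReal (exp ⟪s, m t - x⟫)
          ∂(P.withDensity (fun x => ENNReal.ofReal (exp ⟪t, x⟫ / L t))) := by
      have h := congrArg
        (fun ν : Measure (EuclideanSpace ℝ (Fin n)) =>
          ∫⁻ y, ENNReal.ofReal (exp ⟪s, y⟫) ∂ν) (hsym t)
      have hgm1 : Measurable fun x : EuclideanSpace ℝ (Fin n) => x - m t :=
        measurable_id.sub measurable_const
      have hgm2 : Measurable fun x : EuclideanSpace ℝ (Fin n) => m t - x :=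
        measurable_const.sub measurable_id
      rwa [lintegral_map (hm1 s) hgm1, lintegral_map (hm1 s) hgm2] at h
    rw [lintegral_withDensity_eq_lintegral_mul P hd hg1,
      lintegral_withDensity_eq_lintegral_mul P hd hg2] at h1
    have e1 : ∀ x : EuclideanSpace ℝ (Fin n),
        ((fun x => ENNReal.ofReal (exp ⟪t, x⟫ / L t)) *
          fun x => ENNReal.ofReal (exp ⟪s, x - m t⟫)) x
          = ENNReal.ofReal (((L t)⁻¹ * exp (-⟪s, m t⟫)) * exp ⟪t + s, x⟫) := by
      intro x
      simp only [Pi.mul_apply]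
      rw [← ENNReal.ofReal_mul (div_nonneg (Real.exp_pos _).le (hLpos t).le)]
      congr 1
      rw [inner_sub_right, inner_add_left, Real.exp_sub, Real.exp_add, Real.exp_neg]
      ring
    have e2 : ∀ x : EuclideanSpace ℝ (Fin n),
        ((fun x => ENNReal.ofReal (exp ⟪t, x⟫ / L t)) *
          fun x => ENNReal.ofReal (exp ⟪s, m t - x⟫)) x
          = ENNReal.ofReal (((L t)⁻¹ * exp ⟪s, m t⟫) * exp ⟪t - s, x⟫) := by
      intro x
      simp only [Pi.mul_apply]
      rw [← ENNReal.ofReal_mul (div_nonneg (Real.exp_pos _).le (hLpos t).le)]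
      congr 1
      rw [inner_sub_right, inner_sub_left, Real.exp_sub, Real.exp_sub]
      ring
    have hc1 : (0:ℝ) ≤ (L t)⁻¹ * exp (-⟪s, m t⟫) :=
      mul_nonneg (inv_nonneg.mpr (hLpos t).le) (Real.exp_pos _).le
    have hc2 : (0:ℝ) ≤ (L t)⁻¹ * exp ⟪s, m t⟫ :=
      mul_nonneg (inv_nonneg.mpr (hLpos t).le) (Real.exp_pos _).le
    rw [lintegral_congr e1, lintegral_congr e2, aux (t + s) _ hc1, aux (t - s) _ hc2] at h1
    have h2 := (ENNReal.ofReal_eq_ofReal_iff (mul_nonneg hc1 (hLpos _).le)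
      (mul_nonneg hc2 (hLpos _).le)).mp h1
    rw [mul_assoc, mul_assoc] at h2
    exact mul_left_cancel₀ (inv_ne_zero (hLpos t).ne') h2
  have part1 : ∀ t s : EuclideanSpace ℝ (Fin n),
      2 * ⟪s, m t⟫ = Real.log (L (t + s)) - Real.log (L (t - s)) := by
    intro t s
    have h := congrArg Real.log (key t s)
    rw [Real.log_mul (Real.exp_ne_zero _) (hLpos (t + s)).ne',
      Real.log_mul (Real.exp_ne_zero _) (hLpos (t - s)).ne',
      Real.log_exp, Real.log_exp] at h
    linarith
  refine ⟨part1, fun t s => ?_⟩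
  apply ext_inner_left ℝ
  intro u
  rw [real_inner_smul_right, inner_add_right]
  have h1 := part1 (t + s) u
  have h2 := part1 (t - s) u
  have h3 := part1 t (s + u)
  have h4 := part1 t (s - u)
  have e1 : t + (s + u) = t + s + u := by abel
  have e2 : t - (s + u) = t - s - u := by abel
  have e3 : t + (s - u) = t + s - u := by abel
  have e4 : t - (s - u) = t - s + u := by abel
  rw [e1, e2, inner_add_left] at h3
  rw [e3, e4, inner_sub_left] at h4
  linarith
end

section
/- Let P be a probability measure on ℝ with finite Laplace transform L(t) for all t, satisfying the median condition P_t((−∞,t)) ≤ 1/2 ≤ P_t((−∞,t]) for all t, where P_t(dx) = e^{tx}P(dx)/L(t). Then for every A > 0 there is a finite constant c_A such that P((s,t)) ≤ c_A·(t−s) for all −A ≤ s < t ≤ A. -/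
open MeasureTheory Real Set
open scoped ENNReal

/-!
For `s < t`, the median condition at `s` (the tilt `e^{sx} P(dx)` gives `(-∞, s]` at least
half its mass) and at `t` (the tilt `e^{tx} P(dx)` gives `(-∞, t)` at most half its mass)
combine to `∫_{(s,t)} (e^{sx} + e^{tx}) dP ≤ ∫ |e^{sx} - e^{tx}| dP`. When `|s|, |t| ≤ A`,
the left side is at least `e^{-A²} P((s,t))`, and the right side is at most
`(t - s) ∫ |x| e^{A|x|} dP ≤ (t - s) (L(A + 1) + L(-A - 1))`, with `L` the Laplace transform.
-/

lemma abs_exp_sub_exp_le (a b : ℝ) : |exp a - exp b| ≤ |a - b| * exp (max a b) := by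
  wlog h : b ≤ a with H
  · simpa only [abs_sub_comm, max_comm] using H b a (le_of_not_ge h)
  rw [abs_of_nonneg (sub_nonneg.2 (exp_le_exp.2 h)), abs_of_nonneg (sub_nonneg.2 h),
    max_eq_left h]
  have hb : exp b = exp a * exp (b - a) := by rw [← exp_add]; ring_nf
  nlinarith [add_one_le_exp (b - a), exp_pos a]

lemma abs_mul_exp_le_exp_add_exp_neg (A x : ℝ) :
    |x| * exp (A * |x|) ≤ exp ((A + 1) * x) + exp (-(A + 1) * x) := by
  have habs : |x| ≤ exp |x| := by linarith [add_one_le_exp |x|]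
  calc |x| * exp (A * |x|) ≤ exp |x| * exp (A * |x|) := by gcongr
    _ = exp ((A + 1) * |x|) := by rw [← exp_add]; ring_nf
    _ ≤ exp ((A + 1) * x) + exp (-(A + 1) * x) := by
        rcases abs_cases x with ⟨hx, -⟩ | ⟨hx, -⟩ <;> rw [hx]
        · linarith [exp_pos (-(A + 1) * x)]
        · rw [mul_neg, ← neg_mul]; linarith [exp_pos ((A + 1) * x)]

lemma abs_exp_mul_sub_exp_mul_le {A s t : ℝ} (hs : |s| ≤ A) (ht : |t| ≤ A) (x : ℝ) :
    |exp (s * x) - exp (t * x)| ≤ |t - s| * (exp ((A + 1) * x) + exp (-(A + 1) * x)) := by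
  have hmax : max (s * x) (t * x) ≤ A * |x| := by
    refine max_le ?_ ?_ <;> refine (le_abs_self _).trans ?_ <;> rw [abs_mul] <;> gcongr
  calc |exp (s * x) - exp (t * x)| ≤ |s * x - t * x| * exp (max (s * x) (t * x)) :=
        abs_exp_sub_exp_le _ _
    _ ≤ |t - s| * (|x| * exp (A * |x|)) := by
        rw [← sub_mul, abs_mul, abs_sub_comm, mul_assoc]; gcongr
    _ ≤ |t - s| * (exp ((A + 1) * x) + exp (-(A + 1) * x)) := by
        gcongr; exact abs_mul_exp_le_exp_add_exp_neg A x

lemma exp_neg_mul_self_le_exp_mul {A s x : ℝ} (hs : |s| ≤ A) (hx : |x| ≤ A) :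
    exp (-(A * A)) ≤ exp (s * x) := by
  have : |s * x| ≤ A * A := by
    rw [abs_mul]; exact mul_le_mul hs hx (abs_nonneg x) ((abs_nonneg s).trans hs)
  exact exp_le_exp.2 (by linarith [neg_abs_le (s * x)])

lemma integral_abs_exp_mul_sub_exp_mul_le {μ : Measure ℝ}
    (hμ : ∀ t : ℝ, Integrable (fun x => exp (t * x)) μ) {A s t : ℝ}
    (hs : |s| ≤ A) (ht : |t| ≤ A) :
    ∫ x, |exp (s * x) - exp (t * x)| ∂μ
      ≤ |t - s| * ∫ x, (exp ((A + 1) * x) + exp (-(A + 1) * x)) ∂μ := by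
  rw [← integral_const_mul]
  exact integral_mono ((hμ s).sub (hμ t)).abs (((hμ _).add (hμ _)).const_mul _)
    (abs_exp_mul_sub_exp_mul_le hs ht)

lemma setIntegral_Ioo_add_le_integral_abs_sub {μ : Measure ℝ} {a b : ℝ → ℝ} {s t : ℝ}
    (hst : s < t) (ha : Integrable a μ) (hb : Integrable b μ)
    (ha_med : ∫ x in Ioi s, a x ∂μ ≤ ∫ x in Iic s, a x ∂μ)
    (hb_med : ∫ x in Iio t, b x ∂μ ≤ ∫ x in Ici t, b x ∂μ) :
    ∫ x in Ioo s t, (a x + b x) ∂μ ≤ ∫ x, |a x - b x| ∂μ := by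
  have hab : Integrable (fun x => |a x - b x|) μ := (ha.sub hb).abs
  have ha_split :
      ∫ x in Ioi s, a x ∂μ = ∫ x in Ioo s t, a x ∂μ + ∫ x in Ici t, a x ∂μ := by
    rw [← Ioo_union_Ici_eq_Ioi hst, setIntegral_union
      ((Iio_disjoint_Ici le_rfl).mono_left Ioo_subset_Iio_self) measurableSet_Ici
      ha.integrableOn ha.integrableOn]
  have hb_split :
      ∫ x in Iio t, b x ∂μ = ∫ x in Iic s, b x ∂μ + ∫ x in Ioo s t, b x ∂μ := by
    rw [← Iic_union_Ioo_eq_Iio hst, setIntegral_union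
      ((Iic_disjoint_Ioi le_rfl).mono_right Ioo_subset_Ioi_self) measurableSet_Ioo
      hb.integrableOn hb.integrableOn]
  have hleft : ∫ x in Iic s, a x ∂μ - ∫ x in Iic s, b x ∂μ
      ≤ ∫ x in Iic s, |a x - b x| ∂μ := by
    rw [← integral_sub ha.integrableOn hb.integrableOn]
    exact integral_mono (ha.sub hb).integrableOn hab.integrableOn fun x => le_abs_self _
  have hright : ∫ x in Ici t, b x ∂μ - ∫ x in Ici t, a x ∂μ
      ≤ ∫ x in Ici t, |a x - b x| ∂μ := by
    rw [← integral_sub hb.integrableOn ha.integrableOn]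
    exact integral_mono (hb.sub ha).integrableOn hab.integrableOn
      fun x => (abs_sub_comm (a x) (b x)).symm ▸ le_abs_self _
  have htails : ∫ x in Iic s, |a x - b x| ∂μ + ∫ x in Ici t, |a x - b x| ∂μ
      ≤ ∫ x, |a x - b x| ∂μ := by
    rw [← setIntegral_union (Iic_disjoint_Ici.2 hst.not_ge) measurableSet_Ici
      hab.integrableOn hab.integrableOn]
    exact setIntegral_le_integral hab (.of_forall fun x => abs_nonneg _)
  rw [integral_add ha.integrableOn hb.integrableOn]
  linarith

lemma exp_neg_mul_self_mul_measureReal_Ioo_le {μ : Measure ℝ} [IsFiniteMeasure μ]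
    (hμ : ∀ t : ℝ, Integrable (fun x => exp (t * x)) μ) {A s t : ℝ}
    (hs : |s| ≤ A) (ht : |t| ≤ A) :
    exp (-(A * A)) * μ.real (Ioo s t) ≤ ∫ x in Ioo s t, (exp (s * x) + exp (t * x)) ∂μ := by
  refine setIntegral_ge_of_const_le_real measurableSet_Ioo (measure_ne_top _ _) (fun x hx => ?_)
    ((hμ s).add (hμ t)).integrableOn
  have hx : |x| ≤ A := abs_le.2 ⟨(abs_le.1 hs).1.trans hx.1.le, hx.2.le.trans (abs_le.1 ht).2⟩
  linarith [exp_neg_mul_self_le_exp_mul hs hx, exp_pos (t * x)]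

section Median

variable {α : Type*} [MeasurableSpace α] {μ : Measure α} [NeZero μ] {f : α → ℝ}
  {S : Set α}

lemma setIntegral_exp_le_setIntegral_compl_of_tilted_le_half
    (hf : Integrable (fun x => exp (f x)) μ) (hS : MeasurableSet S)
    (h : μ.tilted f S ≤ 1 / 2) :
    ∫ x in S, exp (f x) ∂μ ≤ ∫ x in Sᶜ, exp (f x) ∂μ := by
  rw [tilted_apply_eq_ofReal_integral' f hS, integral_div, one_div, ← ENNReal.ofReal_ofNat 2,
    ← ENNReal.ofReal_inv_of_pos two_pos, ENNReal.ofReal_le_ofReal_iff (by norm_num),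
    div_le_iff₀ (integral_exp_pos hf), ← integral_add_compl hS hf] at h
  linarith

lemma setIntegral_compl_exp_le_setIntegral_of_half_le_tilted
    (hf : Integrable (fun x => exp (f x)) μ) (hS : MeasurableSet S)
    (h : 1 / 2 ≤ μ.tilted f S) :
    ∫ x in Sᶜ, exp (f x) ∂μ ≤ ∫ x in S, exp (f x) ∂μ := by
  have hS_nonneg : 0 ≤ (∫ x in S, exp (f x) ∂μ) / ∫ x, exp (f x) ∂μ :=
    div_nonneg (setIntegral_nonneg hS fun x _ => (exp_pos _).le) (integral_exp_pos hf).le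
  rw [tilted_apply_eq_ofReal_integral' f hS, integral_div, one_div, ← ENNReal.ofReal_ofNat 2,
    ← ENNReal.ofReal_inv_of_pos two_pos, ENNReal.ofReal_le_ofReal_iff hS_nonneg,
    le_div_iff₀ (integral_exp_pos hf), ← integral_add_compl hS hf] at h
  linarith

end Median

theorem lipschitz_estimate_of_median_condition
    (P : Measure ℝ) [IsProbabilityMeasure P]
    (hint : ∀ t : ℝ, Integrable (fun x => exp (t * x)) P)
    (hmed : ∀ t : ℝ,
      (P.withDensity (fun x => ENNReal.ofReal (exp (t * x) / ∫ y, exp (t * y) ∂P)))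
          (Set.Iio t) ≤ 1 / 2 ∧
      (1 / 2 : ℝ≥0∞) ≤
        (P.withDensity (fun x => ENNReal.ofReal (exp (t * x) / ∫ y, exp (t * y) ∂P)))
          (Set.Iic t)) :
    ∀ A > (0 : ℝ), ∃ c : ℝ, ∀ s t : ℝ, -A ≤ s → s < t → t ≤ A →
      (P (Set.Ioo s t)).toReal ≤ c * (t - s) := by
  intro A _
  refine ⟨exp (A * A) * ∫ x, (exp ((A + 1) * x) + exp (-(A + 1) * x)) ∂P,
    fun s t hs hst ht => ?_⟩
  have hsA : |s| ≤ A := abs_le.2 ⟨hs, (hst.trans_le ht).le⟩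
  have htA : |t| ≤ A := abs_le.2 ⟨(hs.trans_lt hst).le, ht⟩
  -- `hmed u` is the median condition for the tilted measure `P.tilted (u * ·)`.
  have hmed_s : ∫ x in Ioi s, exp (s * x) ∂P ≤ ∫ x in Iic s, exp (s * x) ∂P := by
    simpa only [compl_Iic] using setIntegral_compl_exp_le_setIntegral_of_half_le_tilted
      (hint s) measurableSet_Iic (hmed s).2
  have hmed_t : ∫ x in Iio t, exp (t * x) ∂P ≤ ∫ x in Ici t, exp (t * x) ∂P := by
    simpa only [compl_Iio] using setIntegral_exp_le_setIntegral_compl_of_tilted_le_half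
      (hint t) measurableSet_Iio (hmed t).1
  calc (P (Ioo s t)).toReal = exp (A * A) * (exp (-(A * A)) * P.real (Ioo s t)) := by
        rw [← mul_assoc, ← exp_add, add_neg_cancel, exp_zero, one_mul, measureReal_def]
    _ ≤ exp (A * A) * ∫ x, |exp (s * x) - exp (t * x)| ∂P := by
        gcongr
        exact (exp_neg_mul_self_mul_measureReal_Ioo_le hint hsA htA).trans
          (setIntegral_Ioo_add_le_integral_abs_sub hst (hint s) (hint t) hmed_s hmed_t)
    _ ≤ exp (A * A) * (|t - s| * ∫ x, (exp ((A + 1) * x) + exp (-(A + 1) * x)) ∂P) := by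
        gcongr; exact integral_abs_exp_mul_sub_exp_mul_le hint hsA htA
    _ = _ := by rw [abs_of_pos (sub_pos.2 hst)]; ring
end

section
/- Let F : ℝ → ℝ be the distribution function of a probability measure P with everywhere-finite Laplace transform, and suppose F is continuous and strictly increasing. Then h(t) = ∫_{(−∞,t]} e^{tx} dP(x) can be written as h(t) = H(F(t), t) where H(s,t) = ∫_0^s e^{t F^{−1}(u)} du, and H is differentiable on (0,1) × ℝ with partial derivatives H₁(s,t) = e^{t F^{−1}(s)} and H₂(s,t) = ∫_0^s F^{−1}(u) e^{t F^{−1}(u)} du. -/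
/-!
As `F` is strictly increasing and `F (F⁻¹ u) = u` on `(0, 1)`, `F` pushes `P` forward to the
uniform distribution on `(0, 1)`, and `F⁻¹` pushes that back to `P`. Changing variables along
`F⁻¹` turns `∫_{(-∞, t]} e^{tx} dP(x)` into `∫_0^{F(t)} e^{t F⁻¹(u)} du`, and the integrability of
every `e^{c F⁻¹}` on `(0, 1)` is the finiteness of the Laplace transform of `P`. The `s`-partial of
`H` is then the fundamental theorem of calculus (`F⁻¹` is monotone with image `ℝ`, hence
continuous), the `t`-partial is the derivative of a moment generating function, and `H` is
differentiable because its `s`-partial is jointly continuous while its `t`-partial exists.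
-/

open MeasureTheory Real Filter Topology Set Asymptotics Function ProbabilityTheory

section PartialDerivatives

variable {E₁ E₂ F : Type*} [NormedAddCommGroup E₁] [NormedSpace ℝ E₁] [NormedAddCommGroup E₂]
  [NormedSpace ℝ E₂] [NormedAddCommGroup F] [NormedSpace ℝ F]

theorem hasFDerivAt_uncurry_of_continuousAt_fst {f : E₁ → E₂ → F}
    {f₁ : E₁ → E₂ → E₁ →L[ℝ] F} {f₂ : E₂ →L[ℝ] F} {u : E₁ × E₂}
    (df₁ : ∀ᶠ v in 𝓝 u, HasFDerivAt (f · v.2) (↿f₁ v) v.1) (cf₁ : ContinuousAt ↿f₁ u)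
    (df₂ : HasFDerivAt (f u.1 ·) f₂ u.2) :
    HasFDerivAt ↿f ((↿f₁ u).coprod f₂) u := by
  have hfst : (fun v : E₁ × E₂ => f v.1 v.2 - f u.1 v.2 - ↿f₁ u (v.1 - u.1)) =o[𝓝 u]
      fun v => v.1 - u.1 := by
    refine isLittleO_iff.2 fun ε hε => ?_
    obtain ⟨δ, hδ, hball⟩ := Metric.eventually_nhds_iff_ball.1
      (df₁.and (cf₁.eventually (Metric.closedBall_mem_nhds _ hε)))
    filter_upwards [Metric.ball_mem_nhds u hδ] with v hv
    have mem : ∀ z ∈ Metric.ball u.1 δ, (z, v.2) ∈ Metric.ball u δ := fun z hz => by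
      rw [Metric.mem_ball, Prod.dist_eq]
      exact max_lt hz (lt_of_le_of_lt (le_max_right _ _) hv)
    -- mean value inequality for `f · v.2` on the ball, where `f₁` stays `ε`-close to `f₁ u`
    refine (convex_ball u.1 δ).norm_image_sub_le_of_norm_hasFDerivWithin_le'
      (f := (f · v.2)) (fun z hz => (hball _ (mem z hz)).1.hasFDerivWithinAt)
      (fun z hz => ?_) (Metric.mem_ball_self hδ)
      (Metric.mem_ball.2 (lt_of_le_of_lt (le_max_left _ _) hv))
    simpa [dist_eq_norm] using (hball _ (mem z hz)).2
  have hsnd := (df₂.comp u hasFDerivAt_snd).isLittleO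
  refine HasFDerivAt.of_isLittleO ?_
  convert! (hfst.trans_isBigO (isBigO_fst_prod' (f' := fun v => v - u))).add hsnd using 2 with v
  simp only [HasUncurry.uncurry, id_eq, ContinuousLinearMap.coprod_apply, Prod.fst_sub,
    Prod.snd_sub, ContinuousLinearMap.comp_apply, ContinuousLinearMap.coe_snd', comp_apply]
  abel

end PartialDerivatives

theorem IntegrableOn.intervalIntegrable_of_mem_Ioo {E : Type*} [NormedAddCommGroup E]
    {f : ℝ → E} {μ : Measure ℝ} {a b x : ℝ} (hf : IntegrableOn f (Ioo a b) μ) (hx : x ∈ Ioo a b) :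
    IntervalIntegrable f μ a x :=
  (intervalIntegrable_iff_integrableOn_Ioc_of_le hx.1.le).2
    (hf.mono_set (Ioc_subset_Ioo_right hx.2))

section ExpIntegral

variable {φ : ℝ → ℝ} {a b : ℝ}

theorem hasDerivAt_intervalIntegral_exp_mul_param
    (hint : ∀ c, IntervalIntegrable (fun u => exp (c * φ u)) volume a b) (t : ℝ) :
    HasDerivAt (fun t => ∫ u in a..b, exp (t * φ u)) (∫ u in a..b, φ u * exp (t * φ u)) t := by
  have hmgf : ∀ s : Set ℝ, (∀ c, IntegrableOn (fun u => exp (c * φ u)) s) →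
      HasDerivAt (fun t => ∫ u in s, exp (t * φ u)) (∫ u in s, φ u * exp (t * φ u)) t :=
    fun s hs => hasDerivAt_mgf (by
      rw [show integrableExpSet φ (volume.restrict s) = univ from eq_univ_of_forall hs,
        interior_univ]
      trivial)
  exact (hmgf _ fun c => (hint c).1).sub (hmgf _ fun c => (hint c).2)

theorem hasDerivAt_intervalIntegral_exp_mul_upper (hφ : ContinuousOn φ (Ioo a b))
    (hint : ∀ c, IntegrableOn (fun u => exp (c * φ u)) (Ioo a b)) {s : ℝ} (hs : s ∈ Ioo a b)
    (t : ℝ) : HasDerivAt (fun s => ∫ u in a..s, exp (t * φ u)) (exp (t * φ s)) s :=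
  intervalIntegral.integral_hasDerivAt_right
    (IntegrableOn.intervalIntegrable_of_mem_Ioo (hint t) hs)
    ((continuous_exp.comp_continuousOn (hφ.const_smul t)).stronglyMeasurableAtFilter
      isOpen_Ioo s hs)
    (continuous_exp.continuousAt.comp ((hφ.continuousAt (Ioo_mem_nhds hs.1 hs.2)).const_mul t))

theorem hasFDerivAt_intervalIntegral_exp_mul (hφ : ContinuousOn φ (Ioo a b))
    (hint : ∀ c, IntegrableOn (fun u => exp (c * φ u)) (Ioo a b)) {s : ℝ} (hs : s ∈ Ioo a b)
    (t : ℝ) :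
    HasFDerivAt (fun p : ℝ × ℝ => ∫ u in a..p.1, exp (p.2 * φ u))
      ((ContinuousLinearMap.smulRight (1 : ℝ →L[ℝ] ℝ) (exp (t * φ s))).coprod
        (ContinuousLinearMap.smulRight (1 : ℝ →L[ℝ] ℝ) (∫ u in a..s, φ u * exp (t * φ u))))
      (s, t) := by
  have hcont : ContinuousAt (fun p : ℝ × ℝ => exp (p.2 * φ p.1)) (s, t) :=
    continuous_exp.continuousAt.comp
      (continuousAt_snd.mul ((hφ.continuousAt (Ioo_mem_nhds hs.1 hs.2)).comp continuousAt_fst))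
  refine hasFDerivAt_uncurry_of_continuousAt_fst
    (f := fun x y => ∫ u in a..x, exp (y * φ u))
    (f₁ := fun x y => ContinuousLinearMap.smulRight 1 (exp (y * φ x))) ?_
    ((ContinuousLinearMap.smulRightL ℝ ℝ ℝ 1).continuous.continuousAt.comp hcont)
    (hasDerivAt_intervalIntegral_exp_mul_param
      (fun c => IntegrableOn.intervalIntegrable_of_mem_Ioo (hint c) hs) t).hasFDerivAt
  filter_upwards [(isOpen_Ioo.prod isOpen_univ).mem_nhds ⟨hs, mem_univ t⟩] with p hp using
    (hasDerivAt_intervalIntegral_exp_mul_upper hφ hint hp.1 p.2).hasFDerivAt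

end ExpIntegral

theorem StrictMono.strictMonoOn_of_rightInvOn {α β : Type*} [LinearOrder α] [Preorder β]
    {f : α → β} {g : β → α} {s : Set β} (hf : StrictMono f) (h : ∀ u ∈ s, f (g u) = u) :
    StrictMonoOn g s := fun u hu v hv huv => hf.lt_iff_lt.1 (by rwa [h u hu, h v hv])

section Quantile

variable {P : Measure ℝ} {Finv : ℝ → ℝ}

theorem cdf_mem_Ioo_of_strictMono (hmono : StrictMono (cdf P)) (x : ℝ) : cdf P x ∈ Ioo 0 1 :=
  ⟨(cdf_nonneg P (x - 1)).trans_lt (hmono (sub_one_lt x)),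
    (hmono (lt_add_one x)).trans_le (cdf_le_one P (x + 1))⟩

theorem aemeasurable_quantile (hmono : StrictMono (cdf P))
    (hinv₁ : ∀ u ∈ Ioo 0 1, cdf P (Finv u) = u) :
    AEMeasurable Finv (volume.restrict (Ioo 0 1)) :=
  aemeasurable_restrict_of_monotoneOn measurableSet_Ioo
    (hmono.strictMonoOn_of_rightInvOn hinv₁).monotoneOn

theorem continuousOn_quantile (hmono : StrictMono (cdf P))
    (hinv₁ : ∀ u ∈ Ioo 0 1, cdf P (Finv u) = u) (hinv₂ : ∀ t, Finv (cdf P t) = t) :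
    ContinuousOn Finv (Ioo 0 1) := by
  have himage : Finv '' Ioo 0 1 = univ :=
    eq_univ_of_forall fun x => ⟨cdf P x, cdf_mem_Ioo_of_strictMono hmono x, hinv₂ x⟩
  exact fun s hs => ((hmono.strictMonoOn_of_rightInvOn hinv₁).continuousAt_of_image_mem_nhds
    (Ioo_mem_nhds hs.1 hs.2) (himage ▸ univ_mem)).continuousWithinAt

variable [IsProbabilityMeasure P]

theorem map_cdf_eq_volume_restrict_Ioo (hmono : StrictMono (cdf P))
    (hsurj : Ioo 0 1 ⊆ range (cdf P)) : P.map (cdf P) = volume.restrict (Ioo 0 1) := by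
  have hmeas : Measurable (cdf P) := hmono.monotone.measurable
  have := Measure.isProbabilityMeasure_map (μ := P) hmeas.aemeasurable
  refine Measure.ext_of_Iic _ _ fun a => ?_
  rw [Measure.map_apply hmeas measurableSet_Iic, Measure.restrict_apply measurableSet_Iic]
  rcases le_or_gt a 0 with ha0 | ha0
  · have hpre : cdf P ⁻¹' Iic a = ∅ := eq_empty_of_forall_notMem fun x hx =>
      (cdf_mem_Ioo_of_strictMono hmono x).1.not_ge (le_trans hx ha0)
    have hinter : Iic a ∩ Ioo 0 1 = ∅ := eq_empty_of_forall_notMem fun u hu =>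
      hu.2.1.not_ge (le_trans hu.1 ha0)
    rw [hpre, hinter, measure_empty, measure_empty]
  rcases lt_or_ge a 1 with ha1 | ha1
  · obtain ⟨x, rfl⟩ := hsurj ⟨ha0, ha1⟩
    have hpre : cdf P ⁻¹' Iic (cdf P x) = Iic x := by ext; simp [hmono.le_iff_le]
    have hinter : Iic (cdf P x) ∩ Ioo 0 1 = Ioc 0 (cdf P x) := by
      ext u; simp only [mem_inter_iff, mem_Iic, mem_Ioo, mem_Ioc]
      exact ⟨fun h => ⟨h.2.1, h.1⟩, fun h => ⟨h.2, h.1, h.2.trans_lt ha1⟩⟩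
    rw [hpre, hinter, Real.volume_Ioc, sub_zero, ofReal_cdf]
  · have hpre : cdf P ⁻¹' Iic a = univ := eq_univ_of_forall fun x => (cdf_le_one P x).trans ha1
    rw [hpre, inter_eq_right.2 fun u hu => hu.2.le.trans ha1, measure_univ, Real.volume_Ioo,
      sub_zero, ENNReal.ofReal_one]

theorem map_quantile_volume_restrict_Ioo (hmono : StrictMono (cdf P))
    (hinv₁ : ∀ u ∈ Ioo 0 1, cdf P (Finv u) = u) (hinv₂ : ∀ t, Finv (cdf P t) = t) :
    (volume.restrict (Ioo 0 1)).map Finv = P := by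
  have hcdf := map_cdf_eq_volume_restrict_Ioo hmono fun u hu => ⟨Finv u, hinv₁ u hu⟩
  have hFinv : AEMeasurable Finv (P.map (cdf P)) := hcdf ▸ aemeasurable_quantile hmono hinv₁
  rw [← hcdf, AEMeasurable.map_map_of_aemeasurable hFinv hmono.monotone.measurable.aemeasurable]
  simp [Function.comp_def, hinv₂]

theorem integrableOn_quantile_comp (hmono : StrictMono (cdf P))
    (hinv₁ : ∀ u ∈ Ioo 0 1, cdf P (Finv u) = u) (hinv₂ : ∀ t, Finv (cdf P t) = t) {g : ℝ → ℝ}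
    (hg : Measurable g) (hgP : Integrable g P) :
    IntegrableOn (fun u => g (Finv u)) (Ioo 0 1) := by
  rw [← map_quantile_volume_restrict_Ioo hmono hinv₁ hinv₂] at hgP
  exact (integrable_map_measure hg.aestronglyMeasurable (aemeasurable_quantile hmono hinv₁)).1 hgP

theorem setIntegral_Iic_eq_intervalIntegral_quantile (hmono : StrictMono (cdf P))
    (hinv₁ : ∀ u ∈ Ioo 0 1, cdf P (Finv u) = u) (hinv₂ : ∀ t, Finv (cdf P t) = t) {g : ℝ → ℝ}
    (hg : Measurable g) (t : ℝ) : ∫ x in Iic t, g x ∂P = ∫ u in 0..cdf P t, g (Finv u) := by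
  have hpre : Finv ⁻¹' Iic t ∩ Ioo 0 1 = Ioc 0 (cdf P t) := by
    ext u
    simp only [mem_inter_iff, mem_preimage, mem_Iic, mem_Ioo, mem_Ioc]
    constructor
    · rintro ⟨hu, hu0, hu1⟩
      exact ⟨hu0, hinv₁ u ⟨hu0, hu1⟩ ▸ hmono.monotone hu⟩
    · rintro ⟨hu0, hut⟩
      have hu1 := hut.trans_lt (cdf_mem_Ioo_of_strictMono hmono t).2
      exact ⟨hmono.le_iff_le.1 (by rwa [hinv₁ u ⟨hu0, hu1⟩]), hu0, hu1⟩
  conv_lhs => rw [← map_quantile_volume_restrict_Ioo hmono hinv₁ hinv₂]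
  rw [setIntegral_map measurableSet_Iic hg.aestronglyMeasurable
      (aemeasurable_quantile hmono hinv₁), Measure.restrict_restrict' measurableSet_Ioo, hpre,
    intervalIntegral.integral_of_le (cdf_mem_Ioo_of_strictMono hmono t).1.le]

end Quantile

theorem quantile_representation_and_partials_general
    (P : Measure ℝ) [IsProbabilityMeasure P]
    (hint : ∀ t : ℝ, Integrable (fun x => exp (t * x)) P)
    (F : ℝ → ℝ) (hF : ∀ t, F t = (P (Set.Iic t)).toReal)
    (hFm : StrictMono F)
    (Finv : ℝ → ℝ)
    (hinv₁ : ∀ u ∈ Set.Ioo (0 : ℝ) 1, F (Finv u) = u)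
    (hinv₂ : ∀ t : ℝ, Finv (F t) = t)
    (H : ℝ → ℝ → ℝ)
    (hH : ∀ s t : ℝ, H s t = ∫ u in (0 : ℝ)..s, exp (t * Finv u)) :
    (∀ t : ℝ, (∫ x in Set.Iic t, exp (t * x) ∂P) = H (F t) t) ∧
    (∀ s ∈ Set.Ioo (0 : ℝ) 1, ∀ t : ℝ,
      HasDerivAt (fun s' => H s' t) (exp (t * Finv s)) s ∧
      HasDerivAt (fun t' => H s t') (∫ u in (0 : ℝ)..s, Finv u * exp (t * Finv u)) t ∧
      DifferentiableAt ℝ (fun p : ℝ × ℝ => H p.1 p.2) (s, t)) := by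
  obtain rfl : F = cdf P := funext fun t => (hF t).trans (cdf_eq_real P t).symm
  obtain rfl : H = fun s t => ∫ u in (0 : ℝ)..s, exp (t * Finv u) := funext₂ hH
  have hFinv := continuousOn_quantile hFm hinv₁ hinv₂
  have hexp : ∀ c, IntegrableOn (fun u => exp (c * Finv u)) (Ioo 0 1) := fun c =>
    integrableOn_quantile_comp hFm hinv₁ hinv₂ (g := fun x => exp (c * x)) (by fun_prop) (hint c)
  refine ⟨fun t => setIntegral_Iic_eq_intervalIntegral_quantile hFm hinv₁ hinv₂
      (g := fun x => exp (t * x)) (by fun_prop) t, fun s hs t => ⟨?_, ?_, ?_⟩⟩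
  · exact hasDerivAt_intervalIntegral_exp_mul_upper hFinv hexp hs t
  · exact hasDerivAt_intervalIntegral_exp_mul_param
      (fun c => IntegrableOn.intervalIntegrable_of_mem_Ioo (hexp c) hs) t
  · exact (hasFDerivAt_intervalIntegral_exp_mul hFinv hexp hs t).differentiableAt

theorem quantile_representation_and_partials
    (P : Measure ℝ) [IsProbabilityMeasure P]
    (hint : ∀ t : ℝ, Integrable (fun x => exp (t * x)) P)
    (F : ℝ → ℝ) (hF : ∀ t, F t = (P (Set.Iic t)).toReal)
    (hFc : Continuous F) (hFm : StrictMono F)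
    (Finv : ℝ → ℝ)
    (hinv₁ : ∀ u ∈ Set.Ioo (0 : ℝ) 1, F (Finv u) = u)
    (hinv₂ : ∀ t : ℝ, Finv (F t) = t)
    (H : ℝ → ℝ → ℝ)
    (hH : ∀ s t : ℝ, H s t = ∫ u in (0 : ℝ)..s, exp (t * Finv u)) :
    (∀ t : ℝ, (∫ x in Set.Iic t, exp (t * x) ∂P) = H (F t) t) ∧
    (∀ s ∈ Set.Ioo (0 : ℝ) 1, ∀ t : ℝ,
      HasDerivAt (fun s' => H s' t) (exp (t * Finv s)) s ∧
      HasDerivAt (fun t' => H s t') (∫ u in (0 : ℝ)..s, Finv u * exp (t * Finv u)) t ∧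
      DifferentiableAt ℝ (fun p : ℝ × ℝ => H p.1 p.2) (s, t)) :=
  quantile_representation_and_partials_general P hint F hF hFm Finv hinv₁ hinv₂ H hH
end
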